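/- arXiv:2201.06801 — 2 statements merged into one kernel-verified Lean document; each statement's English description precedes it below -/
import Mathlib

section
/- For every L(1,2)-edge labeling f of G_v and every edge e in S_2, at most one edge of G_v other than e has label f(e); that is, the label of an edge of S_2 is used at most twice in G_v. -/
/-- The infinite triangular grid `T6`. -/
def T6 : SimpleGraph (ℤ × ℤ) where
  Adj u v := (v.1 - u.1, v.2 - u.2) ∈
    ({(1,0), (-1,0), (0,1), (0,-1), (1,1), (-1,-1)} : Set (ℤ × ℤ))
  symm := ⟨by
    rintro ⟨a, b⟩ ⟨c, d⟩ h
    simp only [Set.mem_insert_iff, Set.mem_singleton_iff, Prod.mk.injEq] at h ⊢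
    omega⟩
  loopless := ⟨by
    rintro ⟨a, b⟩ h
    simp only [Set.mem_insert_iff, Set.mem_singleton_iff, Prod.mk.injEq, sub_self] at h
    omega⟩

/-- `f` is an L(1,2)-edge labeling of `G`. -/
def IsL12 {V : Type*} (G : SimpleGraph V) (f : Sym2 V → ℕ) : Prop :=
  (∀ e1 ∈ G.edgeSet, ∀ e2 ∈ G.edgeSet, e1 ≠ e2 → (∃ v, v ∈ e1 ∧ v ∈ e2) →
    f e1 ≠ f e2) ∧
  (∀ e1 ∈ G.edgeSet, ∀ e2 ∈ G.edgeSet, e1 ≠ e2 → ¬ (∃ v, v ∈ e1 ∧ v ∈ e2) →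
    (∃ e3 ∈ G.edgeSet, (∃ v, v ∈ e1 ∧ v ∈ e3) ∧ (∃ v, v ∈ e2 ∧ v ∈ e3)) →
    2 ≤ |(f e1 : ℤ) - (f e2 : ℤ)|)

/-- The subgraph `G_v` of `T6`: all edges with an endpoint adjacent to `v`. -/
def Gv (v : ℤ × ℤ) : SimpleGraph (ℤ × ℤ) where
  Adj u w := T6.Adj u w ∧ (T6.Adj v u ∨ T6.Adj v w)
  symm := ⟨fun u w h => ⟨T6.adj_symm h.1, h.2.symm⟩⟩
  loopless := ⟨fun u h => T6.loopless.irrefl u h.1⟩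

/-- `S_1`: the edges of `G_v` incident to `v`. -/
def S1 (v : ℤ × ℤ) : Set (Sym2 (ℤ × ℤ)) := {e | e ∈ (Gv v).edgeSet ∧ v ∈ e}

/-- `S_2`: the edges of `G_v` both of whose endpoints are adjacent to `v`. -/
def S2 (v : ℤ × ℤ) : Set (Sym2 (ℤ × ℤ)) := {e | e ∈ (Gv v).edgeSet ∧ ∀ u ∈ e, T6.Adj v u}

/-- `S_3`: the remaining edges of `G_v`. -/
def S3 (v : ℤ × ℤ) : Set (Sym2 (ℤ × ℤ)) := (Gv v).edgeSet \ (S1 v ∪ S2 v)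

/-!
An edge `e` of `S_2` is a side `ab` of the hexagon around `v`. An edge carrying the label of `e`
must be at distance at least 3 from `e`, and every edge of `G_v` has an endpoint on the hexagon;
the only hexagon vertices at distance at least 2 from both `a` and `b` are their mirror images
`2v - a` and `2v - b`. So two further edges with label `f e` would each contain one of these two
mirror images, and the mirrored side joining them (an edge of `S_2`) would put the two edges at
distance at most 2 from each other.
-/

def triangularSteps : List (ℤ × ℤ) := [(1, 0), (-1, 0), (0, 1), (0, -1), (1, 1), (-1, -1)]

lemma T6_adj_iff_sub_mem_steps (u w : ℤ × ℤ) : T6.Adj u w ↔ w - u ∈ triangularSteps := by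
  change (w.1 - u.1, w.2 - u.2) ∈ _ ↔ _
  simp [triangularSteps, Prod.sub_def, Prod.ext_iff]

lemma T6_adj_sub_sub_iff (p u w : ℤ × ℤ) : T6.Adj (p - u) (p - w) ↔ T6.Adj w u := by
  simp only [T6_adj_iff_sub_mem_steps, sub_sub_sub_cancel_left]

lemma T6_eq_reflection_of_not_adj (v a b c : ℤ × ℤ) (hva : T6.Adj v a) (hvb : T6.Adj v b)
    (hab : T6.Adj a b) (hvc : T6.Adj v c) (hca : c ≠ a) (hcb : c ≠ b)
    (hnca : ¬ T6.Adj c a) (hncb : ¬ T6.Adj c b) : c = v + v - a ∨ c = v + v - b := by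
  -- with `v` translated to the origin, this is a finite check over the six steps
  have key : ∀ da ∈ triangularSteps, ∀ db ∈ triangularSteps, ∀ dc ∈ triangularSteps,
      db - da ∈ triangularSteps → dc ≠ da → dc ≠ db →
      da - dc ∉ triangularSteps → db - dc ∉ triangularSteps → dc = -da ∨ dc = -db := by
    decide
  simp only [T6_adj_iff_sub_mem_steps] at hva hvb hab hvc hnca hncb
  rw [← sub_sub_sub_cancel_right b a v] at hab
  rw [← sub_sub_sub_cancel_right a c v] at hnca
  rw [← sub_sub_sub_cancel_right b c v] at hncb
  rcases key _ hva _ hvb _ hvc hab (sub_left_inj.not.2 hca) (sub_left_inj.not.2 hcb) hnca hncb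
    with h | h
  · exact .inl (by rw [← sub_add_cancel c v, h]; abel)
  · exact .inr (by rw [← sub_add_cancel c v, h]; abel)

lemma IsL12.ne_and_not_adj_of_label_eq {V : Type*} {G : SimpleGraph V} {f : Sym2 V → ℕ}
    (hf : IsL12 G f) {e₁ e₂ : Sym2 V} (he₁ : e₁ ∈ G.edgeSet) (he₂ : e₂ ∈ G.edgeSet)
    (hne : e₁ ≠ e₂) (hlabel : f e₁ = f e₂) {x y : V} (hx : x ∈ e₁) (hy : y ∈ e₂) :
    x ≠ y ∧ ¬ G.Adj x y := by
  have hdisj : ¬ ∃ z, z ∈ e₁ ∧ z ∈ e₂ := fun h => hf.1 e₁ he₁ e₂ he₂ hne h hlabel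
  refine ⟨fun hxy => hdisj ⟨x, hx, hxy ▸ hy⟩, fun hxy => ?_⟩
  have := hf.2 e₁ he₁ e₂ he₂ hne hdisj
    ⟨s(x, y), hxy, ⟨x, hx, Sym2.mem_mk_left x y⟩, ⟨y, hy, Sym2.mem_mk_right x y⟩⟩
  simp [hlabel] at this

lemma Gv_exists_mem_adj {v : ℤ × ℤ} {e : Sym2 (ℤ × ℤ)} (he : e ∈ (Gv v).edgeSet) :
    ∃ c ∈ e, T6.Adj v c := by
  induction e using Sym2.ind with
  | _ c d =>
    rcases he.2 with hc | hd
    · exact ⟨c, Sym2.mem_mk_left c d, hc⟩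
    · exact ⟨d, Sym2.mem_mk_right c d, hd⟩

lemma mem_S2_iff {v a b : ℤ × ℤ} : s(a, b) ∈ S2 v ↔ T6.Adj a b ∧ T6.Adj v a ∧ T6.Adj v b := by
  constructor
  · rintro ⟨⟨hab, -⟩, hv⟩
    exact ⟨hab, hv a (Sym2.mem_mk_left a b), hv b (Sym2.mem_mk_right a b)⟩
  · rintro ⟨hab, hva, hvb⟩
    refine ⟨⟨hab, .inl hva⟩, fun u hu => ?_⟩
    rcases Sym2.mem_iff.1 hu with rfl | rfl <;> assumption

lemma Gv_exists_mem_reflection {v a b : ℤ × ℤ} (hab : s(a, b) ∈ S2 v) {e : Sym2 (ℤ × ℤ)}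
    (he : e ∈ (Gv v).edgeSet) (hfar : ∀ x ∈ e, ∀ y ∈ s(a, b), x ≠ y ∧ ¬ (Gv v).Adj x y) :
    ∃ c ∈ e, c = v + v - a ∨ c = v + v - b := by
  obtain ⟨hab, hva, hvb⟩ := mem_S2_iff.1 hab
  obtain ⟨c, hc, hvc⟩ := Gv_exists_mem_adj he
  obtain ⟨hca, hnca⟩ := hfar c hc a (Sym2.mem_mk_left a b)
  obtain ⟨hcb, hncb⟩ := hfar c hc b (Sym2.mem_mk_right a b)
  exact ⟨c, hc, T6_eq_reflection_of_not_adj v a b c hva hvb hab hvc hca hcb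
    (fun h => hnca ⟨h, .inr hva⟩) (fun h => hncb ⟨h, .inr hvb⟩)⟩

lemma Gv_adj_reflection {v a b : ℤ × ℤ} (hab : s(a, b) ∈ S2 v) :
    (Gv v).Adj (v + v - a) (v + v - b) := by
  obtain ⟨hab, hva, -⟩ := mem_S2_iff.1 hab
  refine ⟨(T6_adj_sub_sub_iff _ _ _).2 hab.symm, .inl ?_⟩
  simpa using (T6_adj_sub_sub_iff (v + v) v a).2 hva.symm

/-- The label of an edge of `S_2` is used at most twice in `G_v`: at most one edge of
`G_v` other than `e` has label `f e`. -/
theorem S2_label_at_most_twice (v : ℤ × ℤ) (f : Sym2 (ℤ × ℤ) → ℕ)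
    (hf : IsL12 (Gv v) f) : ∀ e ∈ S2 v,
    ∀ e1 ∈ (Gv v).edgeSet, ∀ e2 ∈ (Gv v).edgeSet,
      e1 ≠ e → e2 ≠ e → f e1 = f e → f e2 = f e → e1 = e2 := by
  intro e he e1 he1 e2 he2 hne1 hne2 hfe1 hfe2
  by_contra h12
  induction e using Sym2.ind with
  | _ a b =>
    have hfar : ∀ e ∈ (Gv v).edgeSet, e ≠ s(a, b) → f e = f s(a, b) →
        ∀ x ∈ e, ∀ y ∈ s(a, b), x ≠ y ∧ ¬ (Gv v).Adj x y :=
      fun e heG hne hfe _ hx _ hy => hf.ne_and_not_adj_of_label_eq heG he.1 hne hfe hx hy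
    obtain ⟨x, hx, hx'⟩ := Gv_exists_mem_reflection he he1 (hfar e1 he1 hne1 hfe1)
    obtain ⟨y, hy, hy'⟩ := Gv_exists_mem_reflection he he2 (hfar e2 he2 hne2 hfe2)
    obtain ⟨hxy, hnxy⟩ := hf.ne_and_not_adj_of_label_eq he1 he2 h12 (hfe1.trans hfe2.symm) hx hy
    rcases hx' with rfl | rfl <;> rcases hy' with rfl | rfl
    · exact hxy rfl
    · exact hnxy (Gv_adj_reflection he)
    · exact hnxy (Gv_adj_reflection he).symm
    · exact hxy rfl
end

section
/- Let f be an L(1,2)-edge labeling of the 86-edge graph G such that the 26 edges of H receive pairwise distinct labels whose set is exactly {0,1,...,25}. Then for each fork F_u, at most two of the three labels of the edges of F_u are each the label of three edges of G not in H; moreover, if two labels of edges of F_u are each the label of three edges of G not in H, then these two labels are consecutive integers and one of them equals 0 or 25. -/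
/-- The infinite octagonal grid `T8` (the king graph on `ℤ × ℤ`). -/
def T8 : SimpleGraph (ℤ × ℤ) where
  Adj u v := u ≠ v ∧ |u.1 - v.1| ≤ 1 ∧ |u.2 - v.2| ≤ 1
  symm := ⟨by
    intro u v h
    refine ⟨h.1.symm, ?_, ?_⟩
    · rw [abs_sub_comm]; exact h.2.1
    · rw [abs_sub_comm]; exact h.2.2⟩
  loopless := ⟨fun u h => h.1 rfl⟩

/-- The 2×2 block `B` of vertices of `T8`. -/
def BVerts : Set (ℤ × ℤ) := {(0,0), (1,0), (0,1), (1,1)}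

/-- The 4×4 block `{-1,0,1,2} × {-1,0,1,2}` of vertices of `T8`. -/
def Blk4 : Set (ℤ × ℤ) := {p | p.1 ∈ Set.Icc (-1 : ℤ) 2 ∧ p.2 ∈ Set.Icc (-1 : ℤ) 2}

/-- The 86-edge subgraph `G` of `T8`: all edges of `T8` incident to a vertex of the
4×4 block. -/
def G8 : SimpleGraph (ℤ × ℤ) where
  Adj u w := T8.Adj u w ∧ (u ∈ Blk4 ∨ w ∈ Blk4)
  symm := ⟨fun u w h => ⟨T8.symm.symm _ _ h.1, h.2.symm⟩⟩
  loopless := ⟨fun u h => T8.loopless.irrefl u h.1⟩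

/-- The 26 edges of the subgraph `H` of `T8`: all edges of `T8` incident to a vertex
of the 2×2 block `B`. -/
def HEdges : Set (Sym2 (ℤ × ℤ)) := {e | e ∈ G8.edgeSet ∧ ∃ u ∈ e, u ∈ BVerts}

/-- The fork `F_u` at a vertex `u` of `B`: the 3 edges joining `u` to its three
neighbours in the outward corner direction. -/
def Fork (u : ℤ × ℤ) : Set (Sym2 (ℤ × ℤ)) :=
  {s(u, (3 * u.1 - 1, u.2)), s(u, (3 * u.1 - 1, 3 * u.2 - 1)), s(u, (u.1, 3 * u.2 - 1))}

/-- The 12 fork edges of `H`. -/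
def ForkEdges : Set (Sym2 (ℤ × ℤ)) := ⋃ u ∈ BVerts, Fork u

/-- The label `c` is used on (at least) three edges of `G` outside `H`. -/
def ThriceOutside (f : Sym2 (ℤ × ℤ) → ℕ) (c : ℕ) : Prop :=
  ∃ e1 e2 e3,
    e1 ∈ G8.edgeSet \ HEdges ∧ e2 ∈ G8.edgeSet \ HEdges ∧ e3 ∈ G8.edgeSet \ HEdges ∧
    e1 ≠ e2 ∧ e1 ≠ e3 ∧ e2 ≠ e3 ∧ f e1 = c ∧ f e2 = c ∧ f e3 = c

/-!
If the label `c` of an edge `e ∈ F_u` is used on three edges outside `H`, then every edge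
`h ∈ H` labelled `c ± 1` lies in `F_u`. Indeed, all edges of `H` are within distance two of `e`,
so `h` shares a vertex with `e`. Each of the three outer edges labelled `c` is far from `e` and not
at distance two from `h`; hence it contains a vertex of the frame `Blk4 \ B` (an anchor) that is
far from `e`, i.e. neither equal nor adjacent to its endpoints, and either lies on `h` or is far
from `h`. A finite check shows that two of any three such
vertices are equal or adjacent, which puts two of the outer `c`-edges within distance two.

Since `H` carries exactly the labels `0, …, 25`, the label of such a fork edge has all its
neighbours `c ± 1` in `[0, 25]` among the three labels of `F_u`, and the conclusion is arithmetic.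
-/

open SimpleGraph

section Labeling

variable {V : Type*} {G : SimpleGraph V} {f : Sym2 V → ℕ} {x y : Sym2 V}

def CloseEdges (G : SimpleGraph V) (x y : Sym2 V) : Prop :=
  ∃ v ∈ x, ∃ w ∈ y, v = w ∨ G.Adj v w

namespace IsL12

theorem two_le_abs_sub (hf : IsL12 G f) (hx : x ∈ G.edgeSet) (hy : y ∈ G.edgeSet) (hne : x ≠ y)
    (hclose : CloseEdges G x y) (hdisj : ¬ ∃ v, v ∈ x ∧ v ∈ y) : 2 ≤ |(f x : ℤ) - f y| := by
  obtain ⟨v, hv, w, hw, rfl | hvw⟩ := hclose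
  · exact absurd ⟨v, hv, hw⟩ hdisj
  · exact hf.2 x hx y hy hne hdisj
      ⟨s(v, w), hvw, ⟨v, hv, Sym2.mem_mk_left v w⟩, ⟨w, hw, Sym2.mem_mk_right v w⟩⟩

theorem not_closeEdges_of_eq (hf : IsL12 G f) (hx : x ∈ G.edgeSet) (hy : y ∈ G.edgeSet)
    (hne : x ≠ y) (heq : f x = f y) : ¬ CloseEdges G x y := by
  intro hclose
  by_cases hshare : ∃ v, v ∈ x ∧ v ∈ y
  · exact hf.1 x hx y hy hne hshare heq
  · have := hf.two_le_abs_sub hx hy hne hclose hshare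
    rw [heq, sub_self, abs_zero] at this
    omega

theorem exists_mem_mem_of_succ (hf : IsL12 G f) (hx : x ∈ G.edgeSet) (hy : y ∈ G.edgeSet)
    (hsucc : f x = f y + 1 ∨ f y = f x + 1) (hclose : CloseEdges G x y) :
    ∃ v, v ∈ x ∧ v ∈ y := by
  by_contra hdisj
  have hne : x ≠ y := by rintro rfl; omega
  have := hf.two_le_abs_sub hx hy hne hclose hdisj
  rw [le_abs] at this
  omega

end IsL12

end Labeling

def NeighborsMem (n : ℕ) (S : Set ℕ) (x : ℕ) : Prop :=
  ∀ m ≤ n, (m = x + 1 ∨ x = m + 1) → m ∈ S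

theorem consecutive_of_neighborsMem {n x y z : ℕ} (hn : 3 ≤ n) (hx : x ≤ n) (hy : y ≤ n)
    (hxy : x ≠ y) (hX : NeighborsMem n {x, y, z} x) (hY : NeighborsMem n {x, y, z} y) :
    (x = y + 1 ∨ y = x + 1) ∧ (x = 0 ∨ x = n ∨ y = 0 ∨ y = n) := by
  simp only [NeighborsMem, Set.mem_insert_iff, Set.mem_singleton_iff] at hX hY
  have := hX (x + 1); have := hX (x - 1); have := hY (y + 1); have := hY (y - 1)
  omega

theorem Set.exists_eq_insert_insert_singleton_of_mem {α : Type*} {a b c x y : α}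
    (hx : x ∈ ({a, b, c} : Set α)) (hy : y ∈ ({a, b, c} : Set α)) (hxy : x ≠ y) :
    ∃ z, ({a, b, c} : Set α) = {x, y, z} := by
  simp only [Set.mem_insert_iff, Set.mem_singleton_iff] at hx hy
  rcases hx with rfl | rfl | rfl <;> rcases hy with rfl | rfl | rfl <;>
    first
    | exact absurd rfl hxy
    | exact ⟨_, rfl⟩
    | exact ⟨a, by ext; simp only [Set.mem_insert_iff, Set.mem_singleton_iff]; tauto⟩
    | exact ⟨b, by ext; simp only [Set.mem_insert_iff, Set.mem_singleton_iff]; tauto⟩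
    | exact ⟨c, by ext; simp only [Set.mem_insert_iff, Set.mem_singleton_iff]; tauto⟩

namespace Sym2

variable {α : Type*} {p : α → Prop} [DecidablePred p]

instance decidableBallMem (z : Sym2 α) : Decidable (∀ a ∈ z, p a) :=
  z.recOnSubsingleton fun _ _ => decidable_of_iff' _ forall_mem_pair

instance decidableBexMem (z : Sym2 α) : Decidable (∃ a ∈ z, p a) :=
  z.recOnSubsingleton fun a b => decidable_of_iff (p a ∨ p b) (by simp only [mem_iff,
    exists_eq_or_imp, exists_eq_left])

end Sym2

section Grid

variable {p q v : ℤ × ℤ} {h o x y : Sym2 (ℤ × ℤ)}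

def Near (p q : ℤ × ℤ) : Prop := |p.1 - q.1| ≤ 1 ∧ |p.2 - q.2| ≤ 1

instance (p q : ℤ × ℤ) : Decidable (Near p q) := by unfold Near; infer_instance

instance : DecidableRel T8.Adj := fun p q => decidable_of_iff (p ≠ q ∧ Near p q) Iff.rfl

instance : DecidablePred (· ∈ Blk4) := fun p =>
  decidable_of_iff ((-1 ≤ p.1 ∧ p.1 ≤ 2) ∧ (-1 ≤ p.2 ∧ p.2 ≤ 2)) Iff.rfl

instance : DecidableRel G8.Adj := fun p q => by unfold G8; infer_instance

instance : DecidablePred (· ∈ BVerts) := fun _ => by unfold BVerts; infer_instance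

instance : DecidablePred (· ∈ HEdges) := fun _ => by unfold HEdges; infer_instance

instance (u : ℤ × ℤ) : DecidablePred (· ∈ Fork u) := fun _ => by unfold Fork; infer_instance

theorem mem_bVerts_iff : p ∈ BVerts ↔ (0 ≤ p.1 ∧ p.1 ≤ 1) ∧ (0 ≤ p.2 ∧ p.2 ≤ 1) := by
  obtain ⟨a, b⟩ := p
  simp only [BVerts, Set.mem_insert_iff, Set.mem_singleton_iff, Prod.mk.injEq]
  omega

theorem mem_blk4_iff : p ∈ Blk4 ↔ (-1 ≤ p.1 ∧ p.1 ≤ 2) ∧ (-1 ≤ p.2 ∧ p.2 ≤ 2) := Iff.rfl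

theorem near_of_mem_bVerts (hp : p ∈ BVerts) (hq : q ∈ BVerts) : Near p q := by
  rw [mem_bVerts_iff] at hp hq
  simp only [Near, abs_le]
  omega

theorem mem_blk4_of_near (hp : p ∈ BVerts) (hpq : Near p q) : q ∈ Blk4 := by
  rw [mem_bVerts_iff] at hp
  simp only [Near, abs_le] at hpq
  rw [mem_blk4_iff]
  omega

theorem mem_blk4_of_mem_bVerts (hp : p ∈ BVerts) : p ∈ Blk4 :=
  mem_blk4_of_near hp (near_of_mem_bVerts hp hp)

theorem closeEdges_of_near (hpx : p ∈ x) (hqy : q ∈ y) (hp : p ∈ Blk4) (hpq : Near p q) :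
    CloseEdges G8 x y :=
  ⟨p, hpx, q, hqy, (em (p = q)).imp_right fun hne => ⟨⟨hne, hpq⟩, Or.inl hp⟩⟩

theorem closeEdges_of_mem_hEdges (hx : x ∈ HEdges) (hy : y ∈ HEdges) : CloseEdges G8 x y := by
  obtain ⟨-, p, hpx, hp⟩ := hx
  obtain ⟨-, q, hqy, hq⟩ := hy
  exact closeEdges_of_near hpx hqy (mem_blk4_of_mem_bVerts hp) (near_of_mem_bVerts hp hq)

theorem mem_blk4_of_mem_hEdges (hh : h ∈ HEdges) (hv : v ∈ h) : v ∈ Blk4 := by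
  induction h using Sym2.ind with
  | _ a b =>
    obtain ⟨hab, p, hp, hpB⟩ := hh
    have hba : G8.Adj b a := hab.symm
    rw [Sym2.mem_iff] at hv hp
    rcases hp with rfl | rfl <;> rcases hv with rfl | rfl
    exacts [mem_blk4_of_mem_bVerts hpB, mem_blk4_of_near hpB hab.1.2,
      mem_blk4_of_near hpB hba.1.2, mem_blk4_of_mem_bVerts hpB]

theorem exists_mem_frame (ho : o ∈ G8.edgeSet) (hoH : o ∉ HEdges) :
    ∃ r ∈ o, r ∈ Blk4 ∧ r ∉ BVerts := by
  induction o using Sym2.ind with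
  | _ a b =>
    have hB : ∀ r ∈ s(a, b), r ∉ BVerts := fun r hr hrB => hoH ⟨ho, r, hr, hrB⟩
    rcases ho.2 with ha | hb
    · exact ⟨a, Sym2.mem_mk_left a b, ha, hB a (Sym2.mem_mk_left a b)⟩
    · exact ⟨b, Sym2.mem_mk_right a b, hb, hB b (Sym2.mem_mk_right a b)⟩

end Grid

section Anchor

variable {u v r₁ r₂ r₃ : ℤ × ℤ} {e h o : Sym2 (ℤ × ℤ)}

def IsAnchor (e h : Sym2 (ℤ × ℤ)) (r : ℤ × ℤ) : Prop :=
  r ∈ Blk4 ∧ r ∉ BVerts ∧ (∀ x ∈ e, ¬ Near r x) ∧ (r ∈ h ∨ ∀ x ∈ h, ¬ Near r x)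

instance (e h : Sym2 (ℤ × ℤ)) (r : ℤ × ℤ) : Decidable (IsAnchor e h r) := by
  unfold IsAnchor; infer_instance

theorem exists_isAnchor (ho : o ∈ G8.edgeSet) (hoH : o ∉ HEdges) (hh : h ∈ HEdges)
    (hoe : ¬ CloseEdges G8 o e) (hoh : CloseEdges G8 o h → ∃ v, v ∈ o ∧ v ∈ h) :
    ∃ r ∈ o, IsAnchor e h r := by
  have far_e : ∀ r ∈ o, r ∈ Blk4 → ∀ x ∈ e, ¬ Near r x :=
    fun r hro hr x hx hrx => hoe (closeEdges_of_near hro hx hr hrx)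
  by_cases hclose : CloseEdges G8 o h
  · obtain ⟨v, hvo, hvh⟩ := hoh hclose
    have hv := mem_blk4_of_mem_hEdges hh hvh
    exact ⟨v, hvo, hv, fun hvB => hoH ⟨ho, v, hvo, hvB⟩, far_e v hvo hv, Or.inl hvh⟩
  · obtain ⟨r, hro, hr, hrB⟩ := exists_mem_frame ho hoH
    exact ⟨r, hro, hr, hrB, far_e r hro hr,
      Or.inr fun x hx hrx => hclose (closeEdges_of_near hro hx hr hrx)⟩

theorem exists_eq_mk_of_mem_fork (he : e ∈ Fork u) : ∃ w, e = s(u, w) := by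
  simp only [Fork, Set.mem_insert_iff, Set.mem_singleton_iff] at he
  rcases he with rfl | rfl | rfl <;> exact ⟨_, rfl⟩

theorem fork_subset_hEdges (hu : u ∈ BVerts) : Fork u ⊆ HEdges := by
  intro e he
  simp only [BVerts, Set.mem_insert_iff, Set.mem_singleton_iff] at hu
  simp only [Fork, Set.mem_insert_iff, Set.mem_singleton_iff] at he
  rcases hu with rfl | rfl | rfl | rfl <;> rcases he with rfl | rfl | rfl <;> decide

noncomputable def box6 : Finset (ℤ × ℤ) := Finset.Icc (-2, -2) (3, 3)

theorem blk4_subset_box6 : Blk4 ⊆ box6 := by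
  intro v hv
  rw [mem_blk4_iff] at hv
  simp only [box6, Finset.coe_Icc, Set.mem_Icc, Prod.le_def]
  omega

theorem near_of_isAnchor_of_mem_box6 :
    ∀ u ∈ box6, u ∈ BVerts →
    ∀ w ∈ box6, s(u, w) ∈ Fork u →
    ∀ v ∈ box6, v ∈ s(u, w) →
    ∀ b ∈ box6, s(v, b) ∈ HEdges → s(v, b) ∉ Fork u →
    ∀ r₁ ∈ box6, IsAnchor s(u, w) s(v, b) r₁ →
    ∀ r₂ ∈ box6, IsAnchor s(u, w) s(v, b) r₂ →
    ∀ r₃ ∈ box6, IsAnchor s(u, w) s(v, b) r₃ →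
    Near r₁ r₂ ∨ Near r₁ r₃ ∨ Near r₂ r₃ := by
  decide +kernel

theorem near_of_isAnchor (hu : u ∈ BVerts) (he : e ∈ Fork u) (hve : v ∈ e) (hh : h ∈ HEdges)
    (hvh : v ∈ h) (hhF : h ∉ Fork u) (h₁ : IsAnchor e h r₁) (h₂ : IsAnchor e h r₂)
    (h₃ : IsAnchor e h r₃) : Near r₁ r₂ ∨ Near r₁ r₃ ∨ Near r₂ r₃ := by
  have heH := fork_subset_hEdges hu he
  obtain ⟨w, rfl⟩ := exists_eq_mk_of_mem_fork he
  obtain ⟨b, rfl⟩ := Sym2.mem_iff_exists.mp hvh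
  exact near_of_isAnchor_of_mem_box6 u (blk4_subset_box6 (mem_blk4_of_mem_bVerts hu)) hu
    w (blk4_subset_box6 (mem_blk4_of_mem_hEdges heH (Sym2.mem_mk_right u w))) he
    v (blk4_subset_box6 (mem_blk4_of_mem_hEdges heH hve)) hve
    b (blk4_subset_box6 (mem_blk4_of_mem_hEdges hh (Sym2.mem_mk_right v b))) hh hhF
    r₁ (blk4_subset_box6 h₁.1) h₁ r₂ (blk4_subset_box6 h₂.1) h₂ r₃ (blk4_subset_box6 h₃.1) h₃

end Anchor

section Labels

variable {f : Sym2 (ℤ × ℤ) → ℕ} {u : ℤ × ℤ} {e h : Sym2 (ℤ × ℤ)}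

theorem mem_fork_of_thriceOutside (hf : IsL12 G8 f) (hu : u ∈ BVerts) (he : e ∈ Fork u)
    (hT : ThriceOutside f (f e)) (hh : h ∈ HEdges) (hfh : f h = f e + 1 ∨ f e = f h + 1) :
    h ∈ Fork u := by
  by_contra hhF
  have heH := fork_subset_hEdges hu he
  obtain ⟨v, hve, hvh⟩ := hf.exists_mem_mem_of_succ heH.1 hh.1 hfh.symm
    (closeEdges_of_mem_hEdges heH hh)
  have anchor : ∀ o ∈ G8.edgeSet \ HEdges, f o = f e → ∃ r ∈ o, IsAnchor e h r :=
    fun o ho hfo => exists_isAnchor ho.1 ho.2 hh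
      (hf.not_closeEdges_of_eq ho.1 heH.1 (fun hoe => ho.2 (hoe ▸ heH)) hfo)
      (hf.exists_mem_mem_of_succ ho.1 hh.1 (by omega))
  have far : ∀ o ∈ G8.edgeSet \ HEdges, ∀ o' ∈ G8.edgeSet \ HEdges, o ≠ o' → f o = f e →
      f o' = f e → ∀ r ∈ o, ∀ r' ∈ o', IsAnchor e h r → ¬ Near r r' :=
    fun o ho o' ho' hne hfo hfo' r hr r' hr' ha hrr' => hf.not_closeEdges_of_eq ho.1 ho'.1 hne
      (hfo.trans hfo'.symm) (closeEdges_of_near hr hr' ha.1 hrr')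
  obtain ⟨o₁, o₂, o₃, ho₁, ho₂, ho₃, h₁₂, h₁₃, h₂₃, hf₁, hf₂, hf₃⟩ := hT
  obtain ⟨r₁, hr₁, ha₁⟩ := anchor o₁ ho₁ hf₁
  obtain ⟨r₂, hr₂, ha₂⟩ := anchor o₂ ho₂ hf₂
  obtain ⟨r₃, hr₃, ha₃⟩ := anchor o₃ ho₃ hf₃
  rcases near_of_isAnchor hu he hve hh hvh hhF ha₁ ha₂ ha₃ with hn | hn | hn
  exacts [far o₁ ho₁ o₂ ho₂ h₁₂ hf₁ hf₂ r₁ hr₁ r₂ hr₂ ha₁ hn,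
    far o₁ ho₁ o₃ ho₃ h₁₃ hf₁ hf₃ r₁ hr₁ r₃ hr₃ ha₁ hn,
    far o₂ ho₂ o₃ ho₃ h₂₃ hf₂ hf₃ r₂ hr₂ r₃ hr₃ ha₂ hn]

theorem neighborsMem_of_thriceOutside (hf : IsL12 G8 f) (hrange : f '' HEdges = Set.Iic 25)
    (hu : u ∈ BVerts) (he : e ∈ Fork u) (hT : ThriceOutside f (f e)) :
    NeighborsMem 25 (f '' Fork u) (f e) := by
  intro m hm hmn
  obtain ⟨h, hh, rfl⟩ : m ∈ f '' HEdges := hrange ▸ hm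
  exact ⟨h, mem_fork_of_thriceOutside hf hu he hT hh hmn, rfl⟩

theorem label_le (hrange : f '' HEdges = Set.Iic 25) (hh : h ∈ HEdges) : f h ≤ 25 := by
  have : f h ∈ f '' HEdges := ⟨h, hh, rfl⟩
  rwa [hrange] at this

end Labels

theorem encard_fork (u : ℤ × ℤ) : (Fork u).encard = 3 := by
  refine Set.encard_eq_three.mpr ⟨_, _, _, ?_, ?_, ?_, rfl⟩ <;>
  · simp only [ne_eq, Sym2.eq_iff, Prod.ext_iff]
    omega

/-- Suppose the 26 edges of `H` get pairwise distinct labels forming exactly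
`{0,...,25}`. Then for each fork `F_u`, at most two of the three labels used on
`F_u` are each reused thrice outside `H`; moreover if two of them are, then these
two labels are consecutive and one of them is `0` or `25`. -/
theorem fork_at_most_two_thrice (f : Sym2 (ℤ × ℤ) → ℕ) (hf : IsL12 G8 f)
    (hdist : ∀ e1 ∈ HEdges, ∀ e2 ∈ HEdges, f e1 = f e2 → e1 = e2)
    (hrange : f '' HEdges = Set.Iic 25) :
    ∀ u ∈ BVerts,
      (¬ ∀ e ∈ Fork u, ThriceOutside f (f e)) ∧
      (∀ e1 ∈ Fork u, ∀ e2 ∈ Fork u, e1 ≠ e2 →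
        ThriceOutside f (f e1) → ThriceOutside f (f e2) →
        (f e1 = f e2 + 1 ∨ f e2 = f e1 + 1) ∧
        (f e1 = 0 ∨ f e1 = 25 ∨ f e2 = 0 ∨ f e2 = 25)) := by
  intro u hu
  have hpair : ∀ e1 ∈ Fork u, ∀ e2 ∈ Fork u, e1 ≠ e2 →
      ThriceOutside f (f e1) → ThriceOutside f (f e2) →
      (f e1 = f e2 + 1 ∨ f e2 = f e1 + 1) ∧ (f e1 = 0 ∨ f e1 = 25 ∨ f e2 = 0 ∨ f e2 = 25) := by
    intro e1 he1 e2 he2 hne hT1 hT2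
    have hN1 := neighborsMem_of_thriceOutside hf hrange hu he1 hT1
    have hN2 := neighborsMem_of_thriceOutside hf hrange hu he2 hT2
    obtain ⟨e3, hF⟩ : ∃ e3, Fork u = {e1, e2, e3} :=
      Set.exists_eq_insert_insert_singleton_of_mem he1 he2 hne
    rw [hF, Set.image_insert_eq, Set.image_insert_eq, Set.image_singleton] at hN1 hN2
    have hH := fork_subset_hEdges hu
    exact consecutive_of_neighborsMem (by norm_num) (label_le hrange (hH he1))
      (label_le hrange (hH he2)) (fun h => hne (hdist _ (hH he1) _ (hH he2) h)) hN1 hN2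
  refine ⟨fun hall => ?_, hpair⟩
  obtain ⟨a, b, c, hab, hac, hbc, hF⟩ := Set.encard_eq_three.mp (encard_fork u)
  have hmem : a ∈ Fork u ∧ b ∈ Fork u ∧ c ∈ Fork u := by simp [hF]
  have consec := fun x hx y hy hxy => (hpair x hx y hy hxy (hall x hx) (hall y hy)).1
  have := consec a hmem.1 b hmem.2.1 hab
  have := consec a hmem.1 c hmem.2.2 hac
  have := consec b hmem.2.1 c hmem.2.2 hbc
  omega
end
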